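/- Suppose K(·,x) ∈ C₀(X) for every x ∈ X, span{K(·,x) : x ∈ X} is dense in C₀(X), and every kernel matrix at pairwise distinct points is invertible. If the linear representer theorem holds (for every m, pairwise distinct x₁,…,x_m ∈ X, every continuous Q : ℝ^m → [0,∞), every ψ : [0,∞) → [0,∞) with ψ(t) → ∞ as t → ∞, and every λ > 0, there exists c ∈ ℝ^m such that Σ_j c_j δ_{x_j} minimizes μ ↦ Q((f_μ(x_j))_j) + λψ(‖μ‖) over M(X)), then for every m, every m-tuple x₁,…,x_m of pairwise distinct points of X, and every x ∈ X one has ‖K[x]^{-1} K_x(x)‖₁ ≤ 1. -/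

import Mathlib

/-!
Take the data term `Q v = ∑ j, |v j - K(x, x_j)|` and `ψ = id`. The competitor `δ_x` fits the
data exactly and has norm `1`, so the minimizer `∑ k, c k • δ_{x_k}` given by the representer
theorem satisfies `‖c‖₁ ≤ 1` and `‖K[x] c - K_x(x)‖₁ ≤ λ`. Letting `λ → 0`, `K_x(x)` lies in the
closure of the image of the closed `ℓ¹` unit ball under the invertible matrix `K[x]`, hence
`K[x]⁻¹ K_x(x)` lies in that ball.
-/

open MeasureTheory Matrix

/-- The integral of a function against a finite signed Borel measure,
defined via the Jordan decomposition. -/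
noncomputable def sintegral {X : Type*} [MeasurableSpace X]
    (μ : SignedMeasure X) (f : X → ℝ) : ℝ :=
  (∫ t, f t ∂μ.toJordanDecomposition.posPart) - ∫ t, f t ∂μ.toJordanDecomposition.negPart

/-- The total variation norm of a finite signed Borel measure. -/
noncomputable def tvNorm {X : Type*} [MeasurableSpace X] (μ : SignedMeasure X) : ℝ :=
  (μ.totalVariation Set.univ).toReal

/-- The Dirac measure at a point, as a signed measure. -/
noncomputable def diracSM {X : Type*} [MeasurableSpace X] (x : X) : SignedMeasure X :=
  (Measure.dirac x).toSignedMeasure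

open Finset Filter Topology

section SignedMeasure

variable {X : Type*} [MeasurableSpace X]

theorem toJordanDecomposition_sub_of_mutuallySingular {p q : Measure X} [IsFiniteMeasure p]
    [IsFiniteMeasure q] (h : p ⟂ₘ q) :
    (p.toSignedMeasure - q.toSignedMeasure).toJordanDecomposition = ⟨p, q, h⟩ :=
  SignedMeasure.toJordanDecomposition_eq rfl

theorem sintegral_sub_of_mutuallySingular {p q : Measure X} [IsFiniteMeasure p]
    [IsFiniteMeasure q] (h : p ⟂ₘ q) (f : X → ℝ) :
    sintegral (p.toSignedMeasure - q.toSignedMeasure) f = ∫ t, f t ∂p - ∫ t, f t ∂q := by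
  rw [sintegral, toJordanDecomposition_sub_of_mutuallySingular h]

theorem totalVariation_sub_of_mutuallySingular {p q : Measure X} [IsFiniteMeasure p]
    [IsFiniteMeasure q] (h : p ⟂ₘ q) :
    (p.toSignedMeasure - q.toSignedMeasure).totalVariation = p + q := by
  rw [SignedMeasure.totalVariation, toJordanDecomposition_sub_of_mutuallySingular h]

theorem tvNorm_eq_measureReal (μ : SignedMeasure X) : tvNorm μ = μ.totalVariation.real Set.univ :=
  rfl

theorem diracSM_eq_sub (x : X) :
    diracSM x = (Measure.dirac x).toSignedMeasure - (0 : Measure X).toSignedMeasure := by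
  rw [Measure.toSignedMeasure_zero, sub_zero, diracSM]

theorem totalVariation_diracSM (x : X) : (diracSM x).totalVariation = Measure.dirac x := by
  rw [diracSM_eq_sub, totalVariation_sub_of_mutuallySingular .zero_right, add_zero]

theorem tvNorm_diracSM (x : X) : tvNorm (diracSM x) = 1 := by
  simp [tvNorm_eq_measureReal, totalVariation_diracSM]

theorem sintegral_diracSM [MeasurableSingletonClass X] (x : X) (f : X → ℝ) :
    sintegral (diracSM x) f = f x := by
  rw [diracSM_eq_sub, sintegral_sub_of_mutuallySingular .zero_right]
  simp

end SignedMeasure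

instance Measure.dirac_regular {X : Type*} [TopologicalSpace X] [T1Space X] [MeasurableSpace X]
    [BorelSpace X] (x : X) : (Measure.dirac x).Regular where
  outerRegular A _ r hr := by
    by_cases hx : x ∈ A
    · exact ⟨Set.univ, Set.subset_univ A, isOpen_univ, by simpa [hx] using hr⟩
    · refine ⟨{x}ᶜ, fun a ha hax => hx (hax ▸ ha), isOpen_compl_singleton, ?_⟩
      simpa [hx] using hr
  innerRegular U _ r hr := by
    have hx : x ∈ U := by
      by_contra hx
      simp [hx] at hr
    exact ⟨{x}, Set.singleton_subset_iff.2 hx, isCompact_singleton, by simpa [hx] using hr⟩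

section DiracCombination

variable {X ι : Type*} [MeasurableSpace X] [Fintype ι]

/-- For injective `xs`, `posPartDiracSum xs c` and `posPartDiracSum xs (-c)` are the two parts of
the Jordan decomposition of `∑ k, c k • diracSM (xs k)`. -/
noncomputable def posPartDiracSum (xs : ι → X) (c : ι → ℝ) : Measure X :=
  ∑ k, (c k).toNNReal • Measure.dirac (xs k)

instance (xs : ι → X) (c : ι → ℝ) : IsFiniteMeasure (posPartDiracSum xs c) := by
  unfold posPartDiracSum; infer_instance

theorem sum_smul_diracSM_eq_sub (xs : ι → X) (c : ι → ℝ) :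
    ∑ k, c k • diracSM (xs k) =
      (posPartDiracSum xs c).toSignedMeasure - (posPartDiracSum xs (-c)).toSignedMeasure := by
  ext s hs
  simp only [diracSM, _root_.sum_apply, _root_.smul_apply,
    Measure.toSignedMeasure_apply_measurable hs, measureReal_def, smul_eq_mul, posPartDiracSum,
    Pi.neg_apply, _root_.sub_apply, Measure.coe_finsetSum, Measure.coe_smul, Finset.sum_apply,
    Pi.smul_apply, Measure.nnreal_smul_coe_apply]
  rw [ENNReal.toReal_sum fun k _ => by finiteness, ENNReal.toReal_sum fun k _ => by finiteness,
    ← Finset.sum_sub_distrib]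
  refine Finset.sum_congr rfl fun k _ => ?_
  simp only [ENNReal.toReal_mul, ENNReal.coe_toReal, Real.coe_toNNReal', ← sub_mul,
    max_zero_sub_max_neg_zero_eq_self]

variable [MeasurableSingletonClass X]

theorem integral_posPartDiracSum (xs : ι → X) (c : ι → ℝ) (f : X → ℝ) :
    ∫ t, f t ∂posPartDiracSum xs c = ∑ k, max (c k) 0 * f (xs k) := by
  rw [posPartDiracSum, integral_finsetSum_measure
    fun k _ => (integrable_dirac (by simp)).smul_measure_nnreal]
  simp [integral_smul_nnreal_measure, integral_dirac, NNReal.smul_def]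

theorem posPartDiracSum_mutuallySingular {xs : ι → X} (hxs : Function.Injective xs)
    (c : ι → ℝ) : posPartDiracSum xs c ⟂ₘ posPartDiracSum xs (-c) := by
  refine ⟨xs '' {k | c k < 0}, (Set.toFinite _).measurableSet, ?_, ?_⟩
  · simpa [posPartDiracSum, hxs.mem_set_image] using fun k => le_total (c k) 0
  · simpa [posPartDiracSum, hxs.mem_set_image] using fun k => le_or_gt 0 (c k)

theorem measureReal_univ_posPartDiracSum (xs : ι → X) (c : ι → ℝ) :
    (posPartDiracSum xs c).real Set.univ = ∑ k, max (c k) 0 := by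
  simpa using integral_posPartDiracSum xs c 1

theorem sintegral_sum_smul_diracSM {xs : ι → X} (hxs : Function.Injective xs) (c : ι → ℝ)
    (f : X → ℝ) :
    sintegral (∑ k, c k • diracSM (xs k)) f = ∑ k, c k * f (xs k) := by
  rw [sum_smul_diracSM_eq_sub,
    sintegral_sub_of_mutuallySingular (posPartDiracSum_mutuallySingular hxs c),
    integral_posPartDiracSum, integral_posPartDiracSum, ← Finset.sum_sub_distrib]
  simp only [Pi.neg_apply, ← sub_mul, max_zero_sub_max_neg_zero_eq_self]

theorem tvNorm_sum_smul_diracSM {xs : ι → X} (hxs : Function.Injective xs) (c : ι → ℝ) :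
    tvNorm (∑ k, c k • diracSM (xs k)) = ∑ k, |c k| := by
  rw [tvNorm_eq_measureReal, sum_smul_diracSM_eq_sub,
    totalVariation_sub_of_mutuallySingular (posPartDiracSum_mutuallySingular hxs c),
    measureReal_add_apply, measureReal_univ_posPartDiracSum, measureReal_univ_posPartDiracSum,
    ← Finset.sum_add_distrib]
  simp only [Pi.neg_apply, max_zero_add_max_neg_zero_eq_abs_self]

end DiracCombination

theorem le_of_forall_pos_le_add_mul {a b M : ℝ} (h : ∀ t > 0, a ≤ b + M * t) : a ≤ b := by
  have hlim : Tendsto (fun t => b + M * t) (𝓝[>] 0) (𝓝 b) := tendsto_nhdsWithin_of_tendsto_nhds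
    (by simpa using ((continuous_const_mul M).const_add b).tendsto 0)
  exact ge_of_tendsto hlim (eventually_nhdsWithin_of_forall h)

theorem sum_abs_mulVec_le {m n : Type*} [Fintype m] [Fintype n] (B : Matrix m n ℝ) (v : n → ℝ) :
    ∑ j, |(B *ᵥ v) j| ≤ (∑ j, ∑ k, |B j k|) * ∑ k, |v k| := by
  rw [Finset.sum_mul]
  refine Finset.sum_le_sum fun j _ => ?_
  calc |(B *ᵥ v) j| ≤ ∑ k, |B j k| * |v k| := by
        simpa only [mulVec, dotProduct, abs_mul] using
          Finset.abs_sum_le_sum_abs (fun k => B j k * v k) univ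
    _ ≤ ∑ k, |B j k| * ∑ k, |v k| := Finset.sum_le_sum fun k _ =>
        mul_le_mul_of_nonneg_left (Finset.single_le_sum (f := fun i => |v i|)
          (fun i _ => abs_nonneg _) (Finset.mem_univ k)) (abs_nonneg _)
    _ = (∑ k, |B j k|) * ∑ k, |v k| := (Finset.sum_mul _ _ _).symm

theorem sum_abs_inv_mulVec_le_one {n : Type*} [Fintype n] [DecidableEq n] {A : Matrix n n ℝ}
    (hA : IsUnit A.det) {b : n → ℝ}
    (h : ∀ ε > 0, ∃ c : n → ℝ, ∑ k, |c k| ≤ 1 ∧ ∑ j, |(A *ᵥ c) j - b j| ≤ ε) :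
    ∑ j, |(A⁻¹ *ᵥ b) j| ≤ 1 := by
  refine le_of_forall_pos_le_add_mul (M := ∑ j, ∑ k, |A⁻¹ j k|) fun ε hε => ?_
  obtain ⟨c, hc, hAc⟩ := h ε hε
  have hsplit : A⁻¹ *ᵥ b = c - A⁻¹ *ᵥ (A *ᵥ c - b) := by
    rw [mulVec_sub, mulVec_mulVec, nonsing_inv_mul A hA, one_mulVec, sub_sub_cancel]
  calc ∑ j, |(A⁻¹ *ᵥ b) j| ≤ ∑ j, |c j| + ∑ j, |(A⁻¹ *ᵥ (A *ᵥ c - b)) j| := by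
        rw [hsplit, ← Finset.sum_add_distrib]
        exact Finset.sum_le_sum fun j _ => abs_sub _ _
    _ ≤ 1 + (∑ j, ∑ k, |A⁻¹ j k|) * ε :=
        add_le_add hc ((sum_abs_mulVec_le _ _).trans
          (mul_le_mul_of_nonneg_left hAc (by positivity)))

theorem stmt8_general {X : Type*} [TopologicalSpace X] [T2Space X]
    [MeasurableSpace X] [BorelSpace X]
    (K : X → ZeroAtInftyContinuousMap X ℝ)
    (hinvertible : ∀ (m : ℕ) (xs : Fin m → X), Function.Injective xs →
      IsUnit (Matrix.of fun j k : Fin m => (K (xs j)) (xs k)).det)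
    (hrepresenter : ∀ (m : ℕ) (xs : Fin m → X), Function.Injective xs →
      ∀ Q : (Fin m → ℝ) → ℝ, Continuous Q → (∀ v, 0 ≤ Q v) →
      ∀ ψ : ℝ → ℝ, (∀ t, 0 ≤ t → 0 ≤ ψ t) →
        Filter.Tendsto ψ Filter.atTop Filter.atTop →
      ∀ lam : ℝ, 0 < lam →
      ∃ c : Fin m → ℝ, ∀ μ : SignedMeasure X, μ.totalVariation.Regular →
        Q (fun j => sintegral (∑ k, c k • diracSM (xs k)) (K (xs j)))
            + lam * ψ (tvNorm (∑ k, c k • diracSM (xs k)))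
          ≤ Q (fun j => sintegral μ (K (xs j))) + lam * ψ (tvNorm μ)) :
    ∀ (m : ℕ) (xs : Fin m → X), Function.Injective xs → ∀ x : X,
      ∑ j, |(((Matrix.of fun j k : Fin m => (K (xs j)) (xs k))⁻¹ *ᵥ
        fun j => (K (xs j)) x) j)| ≤ 1 := by
  intro m xs hxs x
  refine sum_abs_inv_mulVec_le_one (hinvertible m xs hxs) fun lam hlam => ?_
  obtain ⟨c, hc⟩ := hrepresenter m xs hxs (fun v => ∑ j, |v j - K (xs j) x|) (by fun_prop)
    (fun v => by positivity) id (fun _ => id) tendsto_id lam hlam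
  have hmin := hc (diracSM x) (by rw [totalVariation_diracSM]; infer_instance)
  simp only [sintegral_sum_smul_diracSM hxs, tvNorm_sum_smul_diracSM hxs, sintegral_diracSM,
    tvNorm_diracSM, id, sub_self, abs_zero, sum_const_zero, zero_add, mul_one] at hmin
  have hKc : ∀ j, ((Matrix.of fun j k : Fin m => (K (xs j)) (xs k)) *ᵥ c) j
      = ∑ k, c k * K (xs j) (xs k) := fun j => by
    simp only [mulVec, dotProduct, of_apply, mul_comm]
  have hres : 0 ≤ ∑ j, |∑ k, c k * K (xs j) (xs k) - K (xs j) x| := by positivity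
  have hc1 : 0 ≤ ∑ k, |c k| := by positivity
  exact ⟨c, by nlinarith, by simp only [hKc]; nlinarith⟩

/-- with `K(·,x) ∈ C₀(X)` (`K x : C₀(X,ℝ)` is `t ↦ K(t,x)`), density of
`span{K(·,x)}` in `C₀(X)`, and every kernel matrix at pairwise distinct points invertible,
if the linear representer theorem holds (for all pairwise distinct `x₁,…,x_m`, continuous
`Q : ℝ^m → [0,∞)`, `ψ : [0,∞) → [0,∞)` with `ψ(t) → ∞`, and `λ > 0`, some
`Σ_j c_j δ_{x_j}` minimizes `μ ↦ Q((f_μ(x_j))_j) + λψ(‖μ‖)` over `M(X)`), then for all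
pairwise distinct `x₁,…,x_m` and all `x ∈ X`, `‖K[x]⁻¹ K_x(x)‖₁ ≤ 1`, where
`(K[x])_{j,k} = K(x_k,x_j) = (K (xs j)) (xs k)` and `(K_x(x))_j = K(x,x_j) = (K (xs j)) x`. -/
theorem stmt8 {X : Type*} [TopologicalSpace X] [LocallyCompactSpace X] [T2Space X]
    [MeasurableSpace X] [BorelSpace X]
    (K : X → ZeroAtInftyContinuousMap X ℝ)
    (hdense : Dense (↑(Submodule.span ℝ (Set.range K)) :
      Set (ZeroAtInftyContinuousMap X ℝ)))
    (hinvertible : ∀ (m : ℕ) (xs : Fin m → X), Function.Injective xs →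
      IsUnit (Matrix.of fun j k : Fin m => (K (xs j)) (xs k)).det)
    (hrepresenter : ∀ (m : ℕ) (xs : Fin m → X), Function.Injective xs →
      ∀ Q : (Fin m → ℝ) → ℝ, Continuous Q → (∀ v, 0 ≤ Q v) →
      ∀ ψ : ℝ → ℝ, (∀ t, 0 ≤ t → 0 ≤ ψ t) →
        Filter.Tendsto ψ Filter.atTop Filter.atTop →
      ∀ lam : ℝ, 0 < lam →
      ∃ c : Fin m → ℝ, ∀ μ : SignedMeasure X, μ.totalVariation.Regular →
        Q (fun j => sintegral (∑ k, c k • diracSM (xs k)) (K (xs j)))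
            + lam * ψ (tvNorm (∑ k, c k • diracSM (xs k)))
          ≤ Q (fun j => sintegral μ (K (xs j))) + lam * ψ (tvNorm μ)) :
    ∀ (m : ℕ) (xs : Fin m → X), Function.Injective xs → ∀ x : X,
      ∑ j, |(((Matrix.of fun j k : Fin m => (K (xs j)) (xs k))⁻¹ *ᵥ
        fun j => (K (xs j)) x) j)| ≤ 1 :=
  stmt8_general K hinvertible hrepresenter
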